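/- Fix 1 < p, q < ∞ with 1/p + 1/q = 1 and r ∈ ℕ, r ≥ 2. Then for every finitely supported real sequence x, (1/3)·|x|_{p,r} ≤ ‖x‖_{p,r} ≤ |x|_{p,r}, where ‖x‖_{p,r} = sup{⟨x,z⟩ : z ∈ K_{q,r}} and |x|_{p,r} = sup{⟨x,y⟩ : y ∈ K^M_{q,r}}. -/

import Mathlib

open scoped BigOperators

def TsirelsonClosed (q : ℝ) (r : ℕ) (S : Set (ℕ →₀ ℝ)) : Prop :=
  (∀ n : ℕ, Finsupp.single n 1 ∈ S ∧ Finsupp.single n (-1) ∈ S) ∧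
  ∀ (l : ℕ) (z : Fin l → ℕ →₀ ℝ), 1 ≤ l → l ≤ r → (∀ i, z i ∈ S) →
    (∀ i j : Fin l, i < j → ∀ a ∈ (z i).support, ∀ b ∈ (z j).support, a < b) →
    ((r : ℝ) ^ (-(1 / q) : ℝ)) • (∑ i, z i) ∈ S

def TsirelsonModClosed (q : ℝ) (r : ℕ) (S : Set (ℕ →₀ ℝ)) : Prop :=
  (∀ n : ℕ, Finsupp.single n 1 ∈ S ∧ Finsupp.single n (-1) ∈ S) ∧
  ∀ (l : ℕ) (z : Fin l → ℕ →₀ ℝ), 1 ≤ l → l ≤ r → (∀ i, z i ∈ S) →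
    (∀ i j : Fin l, i ≠ j → Disjoint (z i).support (z j).support) →
    ((r : ℝ) ^ (-(1 / q) : ℝ)) • (∑ i, z i) ∈ S

def Kqr (q : ℝ) (r : ℕ) : Set (ℕ →₀ ℝ) := ⋂₀ {S | TsirelsonClosed q r S}

def KMqr (q : ℝ) (r : ℕ) : Set (ℕ →₀ ℝ) := ⋂₀ {S | TsirelsonModClosed q r S}

/-- The classical Tsirelson-type norm `‖x‖_{p,r} = sup {⟨x,z⟩ : z ∈ K_{q,r}}`. -/
noncomputable def classicalNorm (q : ℝ) (r : ℕ) (x : ℕ →₀ ℝ) : ℝ :=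
  sSup ((fun z => ∑ i ∈ x.support, x i * z i) '' Kqr q r)

/-- The modified Tsirelson-type norm `|x|_{p,r} = sup {⟨x,y⟩ : y ∈ K^M_{q,r}}`. -/
noncomputable def modifiedNorm (q : ℝ) (r : ℕ) (x : ℕ →₀ ℝ) : ℝ :=
  sSup ((fun y => ∑ i ∈ x.support, x i * y i) '' KMqr q r)

/-!
Write `θ = r ^ (-1/q)` (`tsirelsonFactor q r`). Each closure step multiplies the entries by `θ`
and joins at most `r` pieces, so every `y ∈ K^M_{q,r}` satisfies `|y i| ≤ θ ^ d i` for depths `d`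
with Kraft sum `∑ r ^ (-d i) ≤ 1`. Conversely a signed vector `∑ ±θ ^ e i • e_i` with Kraft sum at
most `1/2` lies in `K_{q,r}`: placing the leaves greedily, in the order of their indices, as aligned
`r`-adic intervals of length `r ^ (-e i)` in `[0, 1)` turns them into the leaves of an `r`-ary
tree, and the subtrees of a node have successive supports. Hence `⟨x, y⟩ ≤ 3 ‖x‖`: for `r ≥ 4`
split the Kraft sum into three parts of at most `1/2` (all weights are at most `1/4` unless `y` is
a single `±e_i`), and for `r ≤ 3` lower every leaf by one level, at the cost of a factor `θ ≥ 1/3`.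
-/

open Finset

lemma Finsupp.support_sum_single_subset {ι M : Type*} [DecidableEq ι] [AddCommMonoid M]
    (P : Finset ι) (f : ι → M) :
    (∑ i ∈ P, Finsupp.single i (f i)).support ⊆ P := by
  intro k hk
  obtain ⟨i, hi, hk⟩ := mem_biUnion.1 (Finsupp.support_finsetSum hk)
  rwa [mem_singleton.1 (Finsupp.support_single_subset hk)]

lemma Nat.add_le_div_mul_add {w m c : ℕ} (hc : 0 < c) (hm : w ∣ m) (hw : w ∣ c) :
    m + w ≤ m / c * c + c := by
  have hlt := Nat.lt_mul_div_succ m hc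
  have := Nat.le_of_lt_add_of_dvd (a := m + w) (by omega) (dvd_add hm dvd_rfl)
    (dvd_mul_of_dvd_left hw (m / c + 1))
  linarith

lemma Nat.div_mem_Ico_of_mem_Ico {c A m k : ℕ} (hc : 0 < c) (hA : c ∣ A) (hm : A ≤ m)
    (hm' : m < A + c * k) : m / c ∈ Ico (A / c) (A / c + k) := by
  obtain ⟨u, rfl⟩ := hA
  rw [Nat.mul_div_cancel_left _ hc, mem_Ico]
  exact ⟨(Nat.le_div_iff_mul_le hc).2 (by linarith), Nat.div_lt_of_lt_mul (by linarith)⟩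

/-- Start block `i` at the first multiple of `W i` beyond twice the total length of the blocks
before it. -/
lemma exists_aligned_placement {ι : Type*} [LinearOrder ι] (P : Finset ι) {W : ι → ℕ}
    (hW : ∀ i, 0 < W i) :
    ∃ a : ι → ℕ, (∀ i, W i ∣ a i) ∧ (∀ i ∈ P, a i + W i ≤ 2 * ∑ j ∈ P, W j) ∧
      ∀ i ∈ P, ∀ j ∈ P, i < j → a i + W i ≤ a j := by
  set S : ι → ℕ := fun i => ∑ j ∈ P with j < i, W j
  have hS_lt : ∀ i ∈ P, ∀ j, i < j → S i + W i ≤ S j := by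
    intro i hi j hij
    have hnot : i ∉ {k ∈ P | k < i} := by simp
    calc S i + W i = ∑ k ∈ insert i {k ∈ P | k < i}, W k := by rw [sum_insert hnot, add_comm]
      _ ≤ S j := sum_le_sum_of_subset (insert_subset (by simp [hi, hij])
          (monotone_filter_right P fun k _ hk => hk.trans hij))
  have hS_le : ∀ i ∈ P, S i + W i ≤ ∑ j ∈ P, W j := by
    intro i hi
    rw [← sum_filter_add_sum_filter_not P (· < i)]
    exact Nat.add_le_add_left (single_le_sum (fun _ _ => Nat.zero_le _) (by simp [hi])) _
  refine ⟨fun i => W i * (2 * S i / W i + 1), fun i => dvd_mul_right _ _, fun i hi => ?_, ?_⟩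
  · have := Nat.mul_div_le (2 * S i) (W i)
    have := hS_le i hi
    simp only [mul_add, mul_one]; omega
  · intro i hi j _ hij
    have := Nat.mul_div_le (2 * S i) (W i)
    have := Nat.lt_mul_div_succ (2 * S j) (hW j)
    have := hS_lt i hi j hij
    simp only [mul_add, mul_one] at *; omega

/-- Greedy bin packing: put each new weight into the currently lightest of three bins. -/
lemma exists_three_coloring_sum_le_half {ι : Type*} [DecidableEq ι] (w : ι → ℝ) (F : Finset ι)
    (hw0 : ∀ i ∈ F, 0 ≤ w i) (hw : ∀ i ∈ F, w i ≤ 1 / 4) (hsum : ∑ i ∈ F, w i ≤ 1) :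
    ∃ c : ι → Fin 3, ∀ k, ∑ i ∈ F with c i = k, w i ≤ 1 / 2 := by
  induction F using Finset.induction_on with
  | empty => exact ⟨fun _ => 0, by simp⟩
  | insert a F ha ih =>
    rw [sum_insert ha] at hsum
    have hwa := hw a (mem_insert_self a F)
    have hwa0 := hw0 a (mem_insert_self a F)
    obtain ⟨c, hc⟩ := ih (fun i hi => hw0 i (mem_insert_of_mem hi))
      (fun i hi => hw i (mem_insert_of_mem hi)) (by linarith)
    obtain ⟨k₀, -, hk₀⟩ : ∃ k₀ ∈ univ, ∑ i ∈ F with c i = k₀, w i ≤ (∑ i ∈ F, w i) / 3 := by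
      refine exists_le_of_sum_le univ_nonempty ?_
      rw [sum_fiberwise, sum_const, card_univ, Fintype.card_fin, nsmul_eq_mul]
      linarith
    refine ⟨Function.update c a k₀, fun k => ?_⟩
    have hF : ∑ i ∈ F with Function.update c a k₀ i = k, w i = ∑ i ∈ F with c i = k, w i :=
      sum_congr (filter_congr fun i hi => by
        rw [Function.update_of_ne (ne_of_mem_of_not_mem hi ha)]) fun _ _ => rfl
    rw [filter_insert, Function.update_self]
    split_ifs with hk
    · subst hk
      rw [sum_insert (fun h => ha (mem_filter.1 h).1), hF]
      linarith
    · rw [hF]; exact hc k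

/-- Unlike `Real.sign`, never `0`, so that `single i (signOne t)` is one of `±e_i`. -/
noncomputable def signOne (t : ℝ) : ℝ := if 0 ≤ t then 1 else -1

lemma signOne_eq_one_or_eq_neg_one (t : ℝ) : signOne t = 1 ∨ signOne t = -1 := by
  unfold signOne; split_ifs <;> simp

lemma mul_signOne (t : ℝ) : t * signOne t = |t| := by
  unfold signOne; split_ifs with h
  · rw [mul_one, abs_of_nonneg h]
  · rw [mul_neg_one, abs_of_neg (not_le.1 h)]

lemma sum_mul_sum_single_apply {ι R : Type*} [DecidableEq ι] [NonUnitalNonAssocSemiring R]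
    (x : ι →₀ R) (P : Finset ι) (c : ι → R) :
    ∑ i ∈ x.support, x i * (∑ j ∈ P, Finsupp.single j (c j)) i = ∑ j ∈ P, x j * c j := by
  simp only [Finsupp.finsetSum_apply, mul_sum]
  rw [sum_comm]
  refine sum_congr rfl fun j _ => ?_
  simp only [Finsupp.single_apply, mul_ite, mul_zero, sum_ite_eq]
  split_ifs with h
  · rfl
  · rw [Finsupp.notMem_support_iff.1 h, zero_mul]

lemma sum_support_mul_eq_sum_support_mul {ι R : Type*} [DecidableEq ι]
    [NonUnitalNonAssocSemiring R] (x y : ι →₀ R) :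
    ∑ i ∈ x.support, x i * y i = ∑ i ∈ y.support, x i * y i := by
  have hvanish : ∀ i, i ∉ x.support ∩ y.support → x i * y i = 0 := fun i hi => by
    by_cases hx : x i = 0 <;> simp_all
  rw [← sum_subset inter_subset_left fun i _ => hvanish i,
    sum_subset inter_subset_right fun i _ => hvanish i]

noncomputable def tsirelsonFactor (q : ℝ) (r : ℕ) : ℝ := (r : ℝ) ^ (-(1 / q) : ℝ)

section Factor

variable {q : ℝ} {r : ℕ}

lemma tsirelsonFactor_nonneg : 0 ≤ tsirelsonFactor q r := by
  unfold tsirelsonFactor; positivity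

lemma tsirelsonFactor_le_one (hq : 0 ≤ q) (hr : 1 ≤ r) : tsirelsonFactor q r ≤ 1 :=
  Real.rpow_le_one_of_one_le_of_nonpos (by exact_mod_cast hr) (by simp; positivity)

lemma inv_le_tsirelsonFactor (hq : 1 ≤ q) (hr : 1 ≤ r) : (r : ℝ)⁻¹ ≤ tsirelsonFactor q r := by
  have hr' : (1 : ℝ) ≤ r := by exact_mod_cast hr
  rw [← Real.rpow_neg_one]
  refine Real.rpow_le_rpow_of_exponent_le hr' (neg_le_neg ?_)
  exact div_le_one_of_le₀ hq (by linarith)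

end Factor

lemma TsirelsonModClosed.tsirelsonClosed {q : ℝ} {r : ℕ} {S : Set (ℕ →₀ ℝ)}
    (h : TsirelsonModClosed q r S) : TsirelsonClosed q r S := by
  refine ⟨h.1, fun l z hl hlr hz hsucc => h.2 l z hl hlr hz fun i j hij => ?_⟩
  rcases hij.lt_or_gt with hlt | hgt
  · exact disjoint_left.2 fun a ha ha' => lt_irrefl a (hsucc i j hlt a ha a ha')
  · exact disjoint_right.2 fun a ha ha' => lt_irrefl a (hsucc j i hgt a ha a ha')

section Closure

variable (q : ℝ) (r : ℕ)

lemma tsirelsonClosed_Kqr : TsirelsonClosed q r (Kqr q r) :=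
  ⟨fun n => ⟨fun _ hS => (hS.1 n).1, fun _ hS => (hS.1 n).2⟩,
    fun l z hl hlr hz hsucc _ hS => hS.2 l z hl hlr (fun i => hz i _ hS) hsucc⟩

lemma Kqr_subset_KMqr : Kqr q r ⊆ KMqr q r :=
  fun _ hz S hS => hz S hS.tsirelsonClosed

lemma KMqr_subset_of_tsirelsonModClosed {S : Set (ℕ →₀ ℝ)} (hS : TsirelsonModClosed q r S) :
    KMqr q r ⊆ S :=
  Set.sInter_subset_of_mem hS

lemma single_mem_Kqr (n : ℕ) {c : ℝ} (hc : c = 1 ∨ c = -1) : Finsupp.single n c ∈ Kqr q r := by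
  rcases hc with rfl | rfl
  exacts [((tsirelsonClosed_Kqr q r).1 n).1, ((tsirelsonClosed_Kqr q r).1 n).2]

lemma smul_sum_mem_Kqr {T : Finset ℕ} (hT : T.Nonempty) (hTr : #T ≤ r) (z : ℕ → ℕ →₀ ℝ)
    (hz : ∀ t ∈ T, z t ∈ Kqr q r)
    (hsucc : ∀ t ∈ T, ∀ t' ∈ T, t < t' → ∀ a ∈ (z t).support, ∀ b ∈ (z t').support, a < b) :
    tsirelsonFactor q r • ∑ t ∈ T, z t ∈ Kqr q r := by
  set emb := T.orderEmbOfFin rfl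
  have hmem : ∀ i, emb i ∈ T := fun i => T.orderEmbOfFin_mem rfl i
  rw [← T.map_orderEmbOfFin_univ rfl, sum_map]
  exact (tsirelsonClosed_Kqr q r).2 #T (z ∘ emb) (card_pos.2 hT) hTr (fun i => hz _ (hmem i))
    fun i j hij => hsucc _ (hmem i) _ (hmem j) (emb.strictMono hij)

lemma smul_sum_mem_Kqr_of_monotoneOn {P : Finset ℕ} (hP : P.Nonempty) {g : ℕ → ℕ}
    (hg : MonotoneOn g P) (hcard : #(P.image g) ≤ r) (f : ℕ → ℝ)
    (hfib : ∀ t ∈ P.image g, ∑ i ∈ P with g i = t, Finsupp.single i (f i) ∈ Kqr q r) :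
    tsirelsonFactor q r • ∑ i ∈ P, Finsupp.single i (f i) ∈ Kqr q r := by
  rw [← sum_fiberwise_of_maps_to fun i hi => mem_image_of_mem g hi]
  refine smul_sum_mem_Kqr q r (hP.image g) hcard _ hfib fun t _ t' _ htt' b hb b' hb' => ?_
  obtain ⟨hbP, rfl⟩ := mem_filter.1 (Finsupp.support_sum_single_subset _ _ hb)
  obtain ⟨hb'P, rfl⟩ := mem_filter.1 (Finsupp.support_sum_single_subset _ _ hb')
  exact lt_of_not_ge fun hb'b => not_le.2 htt' (hg hb'P hbP hb'b)

end Closure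

section Realization

variable (q : ℝ) (r : ℕ)

lemma sum_single_mem_Kqr_of_leaf (hr : 0 < r) {E s A : ℕ} {e a : ℕ → ℕ} {σ : ℕ → ℝ}
    (P : Finset ℕ) (hσ : ∀ i ∈ P, σ i = 1 ∨ σ i = -1)
    (hblock : ∀ i ∈ P, A ≤ a i ∧ a i + r ^ (E - e i) ≤ A + r ^ (E - s))
    (hord : ∀ i ∈ P, ∀ j ∈ P, i < j → a i + r ^ (E - e i) ≤ a j) {i : ℕ} (hi : i ∈ P)
    (his : e i = s) :
    ∑ i ∈ P, Finsupp.single i (σ i * tsirelsonFactor q r ^ (e i - s)) ∈ Kqr q r := by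
  have hPi : P = {i} := by
    refine eq_singleton_iff_unique_mem.2 ⟨hi, fun j hj => ?_⟩
    have := hblock i hi; have := hblock j hj; have := Nat.pow_pos (n := E - e j) hr
    have : r ^ (E - e i) = r ^ (E - s) := by rw [his]
    rcases lt_trichotomy i j with hij | rfl | hji
    · have := hord i hi j hj hij; omega
    · rfl
    · have := hord j hj i hi hji; omega
  rw [hPi, sum_singleton, his, Nat.sub_self, pow_zero, mul_one]
  exact single_mem_Kqr q r i (hσ i hi)

/-- Leaf `i` of an `r`-ary tree of height `E` sits at depth `e i` and occupies the `r`-adic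
interval `[a i, a i + r ^ (E - e i))`; the vector built at the node of depth `s` whose interval
starts at `A` lies in `Kqr`. -/
theorem sum_single_mem_Kqr_of_aligned (hr : 0 < r) {E : ℕ} {e a : ℕ → ℕ} {σ : ℕ → ℝ}
    (s A : ℕ) (P : Finset ℕ) (hP : P.Nonempty) (hσ : ∀ i ∈ P, σ i = 1 ∨ σ i = -1)
    (he : ∀ i ∈ P, s ≤ e i ∧ e i ≤ E) (hA : r ^ (E - s) ∣ A)
    (ha : ∀ i ∈ P, r ^ (E - e i) ∣ a i)
    (hblock : ∀ i ∈ P, A ≤ a i ∧ a i + r ^ (E - e i) ≤ A + r ^ (E - s))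
    (hord : ∀ i ∈ P, ∀ j ∈ P, i < j → a i + r ^ (E - e i) ≤ a j) :
    ∑ i ∈ P, Finsupp.single i (σ i * tsirelsonFactor q r ^ (e i - s)) ∈ Kqr q r := by
  obtain ⟨n, hn⟩ : ∃ n, E - s = n := ⟨_, rfl⟩
  induction n generalizing s A P with
  | zero =>
    obtain ⟨i, hi⟩ := hP
    exact sum_single_mem_Kqr_of_leaf q r hr P hσ hblock hord hi (by have := he i hi; omega)
  | succ n ih =>
    by_cases hleaf : ∃ i ∈ P, e i = s
    · obtain ⟨i, hi, his⟩ := hleaf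
      exact sum_single_mem_Kqr_of_leaf q r hr P hσ hblock hord hi his
    push Not at hleaf
    have hsub : ∀ i ∈ P, s + 1 ≤ e i := fun i hi => by
      have := he i hi; have := hleaf i hi; omega
    -- split the block of length `r ^ (n + 1)` into `r` sub-blocks of length `c`
    set c := r ^ n
    have hc : 0 < c := Nat.pow_pos hr
    have hrc : r ^ (E - s) = c * r := by rw [hn, pow_succ]
    have hc' : r ^ (E - (s + 1)) = c := by rw [show E - (s + 1) = n by omega]
    have hT : P.image (a · / c) ⊆ Ico (A / c) (A / c + r) := by
      intro t ht
      obtain ⟨i, hi, rfl⟩ := mem_image.1 ht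
      have hi' := hblock i hi; have := Nat.pow_pos (n := E - e i) hr
      rw [hrc] at hi' hA
      exact Nat.div_mem_Ico_of_mem_Ico hc (dvd_of_mul_right_dvd hA) hi'.1 (by linarith)
    have hfib : ∀ t ∈ P.image (a · / c), ∑ i ∈ P with a i / c = t,
        Finsupp.single i (σ i * tsirelsonFactor q r ^ (e i - (s + 1))) ∈ Kqr q r := by
      intro t ht
      obtain ⟨i₀, hi₀, rfl⟩ := mem_image.1 ht
      have hmem : ∀ {i}, i ∈ {i ∈ P | a i / c = a i₀ / c} → i ∈ P :=
        fun hi => (mem_filter.1 hi).1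
      refine ih (s + 1) (a i₀ / c * c) _ ⟨i₀, by simp [hi₀]⟩ (fun i hi => hσ i (hmem hi))
        (fun i hi => ⟨hsub i (hmem hi), (he i (hmem hi)).2⟩) (by rw [hc']; exact dvd_mul_left c _)
        (fun i hi => ha i (hmem hi)) (fun i hi => ?_)
        (fun i hi j hj => hord i (hmem hi) j (hmem hj)) (by omega)
      rw [hc', ← (mem_filter.1 hi).2]
      exact ⟨Nat.div_mul_le_self _ _, Nat.add_le_div_mul_add hc (ha i (hmem hi))
        (pow_dvd_pow r (by have := hsub i (hmem hi); omega))⟩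
    have hmono : MonotoneOn (a · / c) P := fun i hi j hj hij => by
      rcases hij.lt_or_eq with hlt | rfl
      · exact Nat.div_le_div_right ((Nat.le_add_right _ _).trans (hord i hi j hj hlt))
      · rfl
    convert smul_sum_mem_Kqr_of_monotoneOn q r hP hmono ((card_le_card hT).trans (by simp)) _ hfib
      using 1
    rw [smul_sum]
    refine sum_congr rfl fun i hi => ?_
    rw [Finsupp.smul_single, smul_eq_mul, show e i - s = e i - (s + 1) + 1 by
      have := hsub i hi; omega, pow_succ]
    congr 1
    ring

theorem sum_single_mem_Kqr_of_kraft (hr : 0 < r) {P : Finset ℕ} (hP : P.Nonempty) (e : ℕ → ℕ)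
    {σ : ℕ → ℝ} (hσ : ∀ i ∈ P, σ i = 1 ∨ σ i = -1)
    (hkraft : ∑ i ∈ P, ((r : ℝ) ^ e i)⁻¹ ≤ 1 / 2) :
    ∑ i ∈ P, Finsupp.single i (σ i * tsirelsonFactor q r ^ e i) ∈ Kqr q r := by
  set E := P.sup e
  have heE : ∀ i ∈ P, e i ≤ E := fun i hi => le_sup hi
  obtain ⟨a, ha, hbound, hord⟩ := exists_aligned_placement P (W := fun i => r ^ (E - e i))
    fun _ => Nat.pow_pos hr
  have htotal : 2 * ∑ i ∈ P, r ^ (E - e i) ≤ r ^ E := by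
    have hr0 : (r : ℝ) ≠ 0 := by exact_mod_cast hr.ne'
    suffices (2 : ℝ) * ∑ i ∈ P, (r : ℝ) ^ (E - e i) ≤ (r : ℝ) ^ E by exact_mod_cast this
    rw [sum_congr rfl fun i hi => pow_sub₀ _ hr0 (heE i hi), ← mul_sum]
    nlinarith [pow_pos (Nat.cast_pos.2 hr : (0 : ℝ) < r) E]
  simpa using sum_single_mem_Kqr_of_aligned q r hr 0 0 P hP hσ
    (fun i hi => ⟨Nat.zero_le _, heE i hi⟩) (dvd_zero _) (fun i _ => ha i)
    (fun i hi => ⟨Nat.zero_le _, by simpa using (hbound i hi).trans htotal⟩) hord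

end Realization

section Kraft

variable (q : ℝ) (r : ℕ)

def kraftBounded : Set (ℕ →₀ ℝ) :=
  {y | ∃ d : ℕ → ℕ, ∑ i ∈ y.support, ((r : ℝ) ^ d i)⁻¹ ≤ 1 ∧
    ∀ i ∈ y.support, |y i| ≤ tsirelsonFactor q r ^ d i}

lemma single_mem_kraftBounded (n : ℕ) {c : ℝ} (hc : c = 1 ∨ c = -1) :
    Finsupp.single n c ∈ kraftBounded q r := by
  have hc0 : c ≠ 0 := by rcases hc with rfl | rfl <;> norm_num
  refine ⟨fun _ => 0, by simp [Finsupp.support_single n hc0], fun i hi => ?_⟩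
  rcases hc with rfl | rfl <;> simp [Finsupp.single_apply] <;> split_ifs <;> simp

lemma tsirelsonModClosed_kraftBounded : TsirelsonModClosed q r (kraftBounded q r) := by
  classical
  refine ⟨fun n => ⟨single_mem_kraftBounded q r n (Or.inl rfl),
    single_mem_kraftBounded q r n (Or.inr rfl)⟩, fun l z hl hlr hz hdisj => ?_⟩
  change tsirelsonFactor q r • ∑ k, z k ∈ kraftBounded q r
  choose d hkraft hdom using hz
  have hunique : ∀ {i j k}, i ∈ (z j).support → i ∈ (z k).support → j = k := fun hj hk => by
    by_contra hjk; exact disjoint_left.1 (hdisj _ _ hjk) hj hk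
  set d' : ℕ → ℕ := fun i => if h : ∃ j, i ∈ (z j).support then d h.choose i + 1 else 0
  have hd' : ∀ j, ∀ i ∈ (z j).support, d' i = d j i + 1 ∧ (∑ k, z k) i = z j i := by
    intro j i hi
    have h : ∃ j, i ∈ (z j).support := ⟨j, hi⟩
    refine ⟨by simp only [d', dif_pos h, hunique h.choose_spec hi], ?_⟩
    rw [Finsupp.finsetSum_apply, sum_eq_single j (fun k _ hkj => ?_) (by simp)]
    by_contra hk; exact hkj (hunique (Finsupp.mem_support_iff.2 hk) hi)
  have hsupp : (tsirelsonFactor q r • ∑ k, z k).support ⊆ univ.biUnion fun j => (z j).support :=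
    Finsupp.support_smul.trans Finsupp.support_finsetSum
  have hr : (0 : ℝ) < r := by exact_mod_cast (hl.trans hlr)
  refine ⟨d', ?_, fun i hi => ?_⟩
  · calc ∑ i ∈ (tsirelsonFactor q r • ∑ k, z k).support, ((r : ℝ) ^ d' i)⁻¹
        ≤ ∑ i ∈ univ.biUnion fun j => (z j).support, ((r : ℝ) ^ d' i)⁻¹ :=
          sum_le_sum_of_subset_of_nonneg hsupp fun _ _ _ => by positivity
      _ = ∑ j, (r : ℝ)⁻¹ * ∑ i ∈ (z j).support, ((r : ℝ) ^ d j i)⁻¹ := by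
          rw [sum_biUnion fun j _ k _ hjk => hdisj j k hjk]
          refine sum_congr rfl fun j _ => ?_
          rw [mul_sum]
          refine sum_congr rfl fun i hi => ?_
          rw [(hd' j i hi).1, pow_succ, mul_inv, mul_comm]
      _ ≤ ∑ _j : Fin l, (r : ℝ)⁻¹ :=
          sum_le_sum fun j _ => mul_le_of_le_one_right (by positivity) (hkraft j)
      _ ≤ 1 := by
          rw [sum_const, card_univ, Fintype.card_fin, nsmul_eq_mul, ← div_eq_mul_inv,
            div_le_one hr]
          exact_mod_cast hlr
  · obtain ⟨j, -, hij⟩ := mem_biUnion.1 (hsupp hi)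
    rw [Finsupp.smul_apply, smul_eq_mul, (hd' j i hij).2, (hd' j i hij).1, pow_succ, abs_mul,
      abs_of_nonneg tsirelsonFactor_nonneg, mul_comm]
    exact mul_le_mul_of_nonneg_right (hdom j i hij) tsirelsonFactor_nonneg

lemma KMqr_subset_kraftBounded : KMqr q r ⊆ kraftBounded q r :=
  KMqr_subset_of_tsirelsonModClosed q r (tsirelsonModClosed_kraftBounded q r)

end Kraft

section Norm

variable {q : ℝ} {r : ℕ}

lemma abs_apply_le_one_of_mem_KMqr (hq : 0 ≤ q) (hr : 1 ≤ r) {y : ℕ →₀ ℝ}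
    (hy : y ∈ KMqr q r) (i : ℕ) : |y i| ≤ 1 := by
  obtain ⟨d, -, hdom⟩ := KMqr_subset_kraftBounded q r hy
  by_cases hi : i ∈ y.support
  · exact (hdom i hi).trans (pow_le_one₀ tsirelsonFactor_nonneg (tsirelsonFactor_le_one hq hr))
  · simp [Finsupp.notMem_support_iff.1 hi]

lemma bddAbove_image_KMqr (hq : 0 ≤ q) (hr : 1 ≤ r) (x : ℕ →₀ ℝ) :
    BddAbove ((fun y => ∑ i ∈ x.support, x i * y i) '' KMqr q r) := by
  refine ⟨∑ i ∈ x.support, |x i|, ?_⟩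
  rintro _ ⟨y, hy, rfl⟩
  refine sum_le_sum fun i _ => (le_abs_self _).trans ?_
  rw [abs_mul]
  exact mul_le_of_le_one_right (abs_nonneg _) (abs_apply_le_one_of_mem_KMqr hq hr hy i)

lemma sum_mul_le_classicalNorm (hq : 0 ≤ q) (hr : 1 ≤ r) (x : ℕ →₀ ℝ) {z : ℕ →₀ ℝ}
    (hz : z ∈ Kqr q r) : ∑ i ∈ x.support, x i * z i ≤ classicalNorm q r x :=
  le_csSup ((bddAbove_image_KMqr hq hr x).mono (Set.image_mono (Kqr_subset_KMqr q r)))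
    (Set.mem_image_of_mem _ hz)

lemma sum_abs_mul_le_classicalNorm (hq : 0 ≤ q) (hr : 1 ≤ r) (x : ℕ →₀ ℝ) (P : Finset ℕ)
    (c : ℕ → ℝ) (hz : ∑ j ∈ P, Finsupp.single j (signOne (x j) * c j) ∈ Kqr q r) :
    ∑ j ∈ P, |x j| * c j ≤ classicalNorm q r x := by
  have := sum_mul_le_classicalNorm hq hr x hz
  rwa [sum_mul_sum_single_apply, sum_congr rfl fun j _ => by rw [← mul_assoc, mul_signOne]]
    at this

lemma abs_apply_le_classicalNorm (hq : 0 ≤ q) (hr : 1 ≤ r) (x : ℕ →₀ ℝ) (i : ℕ) :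
    |x i| ≤ classicalNorm q r x := by
  simpa using sum_abs_mul_le_classicalNorm hq hr x {i} (fun _ => 1)
    (by simpa using single_mem_Kqr q r i (signOne_eq_one_or_eq_neg_one (x i)))

lemma sum_abs_mul_pow_le_classicalNorm (hq : 0 ≤ q) (hr : 1 ≤ r) (x : ℕ →₀ ℝ) (P : Finset ℕ)
    (e : ℕ → ℕ) (hkraft : ∑ i ∈ P, ((r : ℝ) ^ e i)⁻¹ ≤ 1 / 2) :
    ∑ i ∈ P, |x i| * tsirelsonFactor q r ^ e i ≤ classicalNorm q r x := by
  rcases P.eq_empty_or_nonempty with rfl | hP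
  · simpa using (abs_nonneg _).trans (abs_apply_le_classicalNorm hq hr x 0)
  · exact sum_abs_mul_le_classicalNorm hq hr x P _ (sum_single_mem_Kqr_of_kraft q r hr hP e
      (fun i _ => signOne_eq_one_or_eq_neg_one (x i)) hkraft)

end Norm

section KeyEstimate

variable {q : ℝ} {r : ℕ}

/-- For `r ≤ 3`, pushing every depth one level down divides the Kraft sum by `r ≥ 2` and costs
only the factor `θ ≥ 1/3`. -/
lemma sum_abs_mul_pow_le_three_mul_of_le_three (hq : 1 ≤ q) (hr : 2 ≤ r) (hr3 : r ≤ 3)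
    (x : ℕ →₀ ℝ) (G : Finset ℕ) (d : ℕ → ℕ) (hkraft : ∑ i ∈ G, ((r : ℝ) ^ d i)⁻¹ ≤ 1) :
    ∑ i ∈ G, |x i| * tsirelsonFactor q r ^ d i ≤ 3 * classicalNorm q r x := by
  have hrR : (2 : ℝ) ≤ r := by exact_mod_cast hr
  have hkraft' : ∑ i ∈ G, ((r : ℝ) ^ (d i + 1))⁻¹ ≤ 1 / 2 :=
    calc ∑ i ∈ G, ((r : ℝ) ^ (d i + 1))⁻¹ = (∑ i ∈ G, ((r : ℝ) ^ d i)⁻¹) * (r : ℝ)⁻¹ := by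
          simp only [pow_succ, mul_inv, ← sum_mul]
      _ ≤ 1 * 2⁻¹ := mul_le_mul hkraft (inv_anti₀ two_pos hrR) (by positivity) zero_le_one
      _ = 1 / 2 := by norm_num
  have hshift := sum_abs_mul_pow_le_classicalNorm (q := q) (r := r) (by linarith) (by omega) x G
    (d · + 1) hkraft'
  have hθ : 1 / 3 ≤ tsirelsonFactor q r :=
    le_trans (by rw [one_div]; exact inv_anti₀ (by linarith) (by exact_mod_cast hr3))
      (inv_le_tsirelsonFactor hq (by omega))
  simp only [pow_succ, ← mul_assoc, ← sum_mul] at hshift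
  have hT : 0 ≤ ∑ i ∈ G, |x i| * tsirelsonFactor q r ^ d i :=
    sum_nonneg fun i _ => mul_nonneg (abs_nonneg _) (pow_nonneg tsirelsonFactor_nonneg _)
  nlinarith

/-- For `r ≥ 4`, all weights `r ^ (-d i)` are at most `1/4` unless some depth is `0`, which forces
`G` to be a singleton; so `G` splits into three parts of Kraft sum at most `1/2`. -/
lemma sum_abs_mul_pow_le_three_mul_of_four_le (hq : 0 ≤ q) (hr : 4 ≤ r)
    (x : ℕ →₀ ℝ) (G : Finset ℕ) (d : ℕ → ℕ) (hkraft : ∑ i ∈ G, ((r : ℝ) ^ d i)⁻¹ ≤ 1) :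
    ∑ i ∈ G, |x i| * tsirelsonFactor q r ^ d i ≤ 3 * classicalNorm q r x := by
  have hrR : (4 : ℝ) ≤ r := by exact_mod_cast hr
  have hnorm := abs_apply_le_classicalNorm (r := r) hq (by omega) x
  by_cases hroot : ∃ i ∈ G, d i = 0
  · obtain ⟨i, hi, hdi⟩ := hroot
    have hG : G = {i} := by
      refine eq_singleton_iff_unique_mem.2 ⟨hi, fun j hj => ?_⟩
      by_contra hji
      have := sum_le_sum_of_subset_of_nonneg (f := fun k => ((r : ℝ) ^ d k)⁻¹)
        (insert_subset hi (singleton_subset_iff.2 hj)) fun k _ _ => by positivity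
      rw [sum_pair (Ne.symm hji), hdi, pow_zero, inv_one] at this
      linarith [this.trans hkraft, (by positivity : 0 < ((r : ℝ) ^ d j)⁻¹)]
    rw [hG, sum_singleton, hdi, pow_zero, mul_one]
    linarith [hnorm i, abs_nonneg (x i)]
  push Not at hroot
  obtain ⟨c, hc⟩ := exists_three_coloring_sum_le_half (fun i => ((r : ℝ) ^ d i)⁻¹) G
    (fun i _ => by positivity)
    (fun i hi => by
      rw [show (1 : ℝ) / 4 = 4⁻¹ by norm_num]
      exact inv_anti₀ (by norm_num) (hrR.trans (le_self_pow₀ (by linarith) (hroot i hi))))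
    hkraft
  rw [← sum_fiberwise G c, Fin.sum_univ_three]
  have := fun k => sum_abs_mul_pow_le_classicalNorm (r := r) hq (by omega) x _ d (hc k)
  linarith [this 0, this 1, this 2]

lemma sum_mul_le_three_mul_classicalNorm (hq : 1 ≤ q) (hr : 2 ≤ r)
    (x : ℕ →₀ ℝ) {y : ℕ →₀ ℝ} (hy : y ∈ KMqr q r) :
    ∑ i ∈ x.support, x i * y i ≤ 3 * classicalNorm q r x := by
  obtain ⟨d, hkraft, hdom⟩ := KMqr_subset_kraftBounded q r hy
  calc ∑ i ∈ x.support, x i * y i = ∑ i ∈ y.support, x i * y i :=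
        sum_support_mul_eq_sum_support_mul x y
    _ ≤ ∑ i ∈ y.support, |x i| * tsirelsonFactor q r ^ d i := sum_le_sum fun i hi =>
        (le_abs_self _).trans (abs_mul (x i) (y i) ▸
          mul_le_mul_of_nonneg_left (hdom i hi) (abs_nonneg _))
    _ ≤ 3 * classicalNorm q r x := by
        rcases le_or_gt r 3 with hr3 | hr4
        · exact sum_abs_mul_pow_le_three_mul_of_le_three hq hr hr3 x _ d hkraft
        · exact sum_abs_mul_pow_le_three_mul_of_four_le (by linarith) hr4 x _ d hkraft

end KeyEstimate

theorem norms_three_equivalent_general (q : ℝ) (hq : 1 < q) (r : ℕ) (hr : 2 ≤ r) (x : ℕ →₀ ℝ) :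
    (1 / 3) * modifiedNorm q r x ≤ classicalNorm q r x ∧
      classicalNorm q r x ≤ modifiedNorm q r x := by
  have hK : (Kqr q r).Nonempty := ⟨_, single_mem_Kqr q r 0 (Or.inl rfl)⟩
  constructor
  · have : modifiedNorm q r x ≤ 3 * classicalNorm q r x :=
      csSup_le ((hK.mono (Kqr_subset_KMqr q r)).image _) fun _ ⟨y, hy, hxy⟩ =>
        hxy ▸ sum_mul_le_three_mul_classicalNorm hq.le hr x hy
    linarith
  · exact csSup_le_csSup (bddAbove_image_KMqr (by linarith) (by omega) x) (hK.image _)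
      (Set.image_mono (Kqr_subset_KMqr q r))

theorem norms_three_equivalent (p q : ℝ) (hp : 1 < p) (hq : 1 < q)
    (hpq : 1 / p + 1 / q = 1) (r : ℕ) (hr : 2 ≤ r) (x : ℕ →₀ ℝ) :
    (1 / 3) * modifiedNorm q r x ≤ classicalNorm q r x ∧
      classicalNorm q r x ≤ modifiedNorm q r x :=
  norms_three_equivalent_general q hq r hr x
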